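/- (Theorem 1, upper bound.) Let p_t, p_s and p_1, …, p_N (N ≥ 1) be probability densities on a measure space (Ω, μ). Assume that max_{1≤i≤N} d_JS(p_i, p_s) ≥ d_JS(p_u, p_v) for all u, v ∈ {1, …, N}. Then TV(p_t, p_s) ≤ (1/N)·Σ_{i=1}^N TV(p_i, p_s) + √2 · min_{1≤i≤N} d_JS(p_i, p_t) + √2 · max_{1≤i≤N} d_JS(p_i, p_s). In the paper's terminology: the Discriminant Risk on the target domain is bounded by the average Discriminant Risk over the source subsets, plus √2 times the smallest Jensen–Shannon distance from a source subset prediction distribution to the target prediction distribution, plus √2 times the largest Jensen–Shannon distance from a source subset prediction distribution to the overall source prediction distribution. -/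

import Mathlib

/-!
Pointwise, `(a - b)² / (2(a + b)) ≤ a log (2a/(a + b)) + b log (2b/(a + b))`, the right side being
the integrand of `2 · JS`, and by AM-GM `|a - b| ≤ (c/2) · (a - b)² / (2(a + b)) + (a + b)/c`.
Integrating gives `TV(p, q) ≤ c · JS(p, q)/2 + 1/c` for every `c > 0`, which at the best `c` is
`TV ≤ √2 · d_JS`. The theorem follows by averaging over `i` the triangle inequality
`TV(p_t, p_s) ≤ TV(p_t, p_j) + TV(p_j, p_i) + TV(p_i, p_s)`, with `p_j` the closest `p_k` to `p_t`.
-/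

open MeasureTheory

/-- A probability density on `(Ω, μ)`: nonnegative, measurable, integrating to 1. -/
def IsProbDensity {Ω : Type*} [MeasurableSpace Ω] (μ : Measure Ω) (p : Ω → ℝ) : Prop :=
  Measurable p ∧ (∀ x, 0 ≤ p x) ∧ ∫ x, p x ∂μ = 1

/-- Kullback–Leibler divergence between densities. -/
noncomputable def KLdiv {Ω : Type*} [MeasurableSpace Ω] (μ : Measure Ω) (p q : Ω → ℝ) : ℝ :=
  ∫ x, p x * Real.log (p x / q x) ∂μ

/-- Jensen–Shannon divergence between densities. -/
noncomputable def JSdiv {Ω : Type*} [MeasurableSpace Ω] (μ : Measure Ω) (p q : Ω → ℝ) : ℝ :=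
  (1 / 2) * (KLdiv μ p (fun x => (p x + q x) / 2) + KLdiv μ q (fun x => (p x + q x) / 2))

/-- Square root of the Jensen–Shannon divergence. -/
noncomputable def dJS {Ω : Type*} [MeasurableSpace Ω] (μ : Measure Ω) (p q : Ω → ℝ) : ℝ :=
  Real.sqrt (JSdiv μ p q)

/-- Total variation distance between densities. -/
noncomputable def TVdist {Ω : Type*} [MeasurableSpace Ω] (μ : Measure Ω) (p q : Ω → ℝ) : ℝ :=
  (1 / 2) * ∫ x, |p x - q x| ∂μ

open Real

theorem sq_le_one_add_mul_log_add_one_sub_mul_log {t : ℝ} (ht : |t| < 1) :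
    t ^ 2 ≤ (1 + t) * log (1 + t) + (1 - t) * log (1 - t) := by
  have ht2 : |t ^ 2| < 1 := by
    rw [abs_pow, sq_lt_one_iff₀ (abs_nonneg t)]; exact ht
  -- `t (log (1 + t) - log (1 - t)) + log (1 - t²) = ∑ t ^ (2k+2) / ((2k+1)(k+1))`, a series of
  -- nonnegative terms whose first term is `t²`
  have hsum := ((hasSum_log_sub_log_of_abs_lt_one ht).mul_left t).sub
    (hasSum_pow_div_log_of_abs_lt_one ht2)
  have hlog : log (1 - t ^ 2) = log (1 + t) + log (1 - t) := by
    rw [← log_mul (by linarith [neg_abs_le t]) (by linarith [le_abs_self t])]; ring_nf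
  rw [hlog, show t * (log (1 + t) - log (1 - t)) - -(log (1 + t) + log (1 - t))
    = (1 + t) * log (1 + t) + (1 - t) * log (1 - t) by ring] at hsum
  have hterm : ∀ k : ℕ, (t ^ 2) ^ (k + 1) / ((2 * k + 1) * (k + 1)) =
      t * (2 * (1 / (2 * k + 1)) * t ^ (2 * k + 1)) - (t ^ 2) ^ (k + 1) / (k + 1) := by
    intro k
    field_simp
    ring
  simp only [← hterm] at hsum
  simpa using le_hasSum hsum 0 fun k _ => by positivity

theorem sq_sub_div_le_mul_log_div_midpoint_add {a b : ℝ} (ha : 0 ≤ a) (hb : 0 ≤ b) :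
    (a - b) ^ 2 / (2 * (a + b)) ≤
      a * log (a / ((a + b) / 2)) + b * log (b / ((a + b) / 2)) := by
  have half_le_log_two : (1 : ℝ) / 2 ≤ log 2 := by linarith [log_two_gt_d9]
  rcases ha.eq_or_lt with rfl | ha
  · rcases hb.eq_or_lt with rfl | hb
    · simp
    · have h2 : b / (b / 2) = 2 := by field_simp
      rw [zero_add, zero_sub, neg_sq, h2, zero_mul, zero_add,
        show b ^ 2 / (2 * b) = b * (1 / 2) by field_simp]
      exact mul_le_mul_of_nonneg_left half_le_log_two hb.le
  rcases hb.eq_or_lt with rfl | hb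
  · have h2 : a / (a / 2) = 2 := by field_simp
    rw [add_zero, sub_zero, h2, zero_mul, add_zero,
      show a ^ 2 / (2 * a) = a * (1 / 2) by field_simp]
    exact mul_le_mul_of_nonneg_left half_le_log_two ha.le
  set m := (a + b) / 2
  set t := (a - b) / (a + b)
  have hm : 0 < m := by positivity
  have ht : |t| < 1 := by
    rw [abs_div, abs_of_pos (by positivity : 0 < a + b), div_lt_one (by positivity), abs_lt]
    constructor <;> linarith
  have ha_eq : a = m * (1 + t) := by simp only [m, t]; field_simp; ring
  have hb_eq : b = m * (1 - t) := by simp only [m, t]; field_simp; ring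
  have hlhs : (a - b) ^ 2 / (2 * (a + b)) = m * t ^ 2 := by simp only [m, t]; field_simp
  rw [hlhs]
  calc m * t ^ 2 ≤ m * ((1 + t) * log (1 + t) + (1 - t) * log (1 - t)) :=
        mul_le_mul_of_nonneg_left (sq_le_one_add_mul_log_add_one_sub_mul_log ht) hm.le
    _ = a * log (a / m) + b * log (b / m) := by
        rw [ha_eq, hb_eq, mul_div_cancel_left₀ _ hm.ne', mul_div_cancel_left₀ _ hm.ne']
        ring

theorem abs_sub_le_mul_sq_sub_div_add {a b c : ℝ} (ha : 0 ≤ a) (hb : 0 ≤ b) (hc : 0 < c) :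
    |a - b| ≤ c / 2 * ((a - b) ^ 2 / (2 * (a + b))) + (a + b) / c := by
  rcases (add_nonneg ha hb).eq_or_lt with hs | hs
  · rw [show a = 0 by linarith, show b = 0 by linarith]; simp
  have hsq : c / 2 * ((a - b) ^ 2 / (2 * (a + b))) + (a + b) / c - |a - b| =
      (c * |a - b| - 2 * (a + b)) ^ 2 / (4 * (a + b) * c) := by
    rw [← sq_abs (a - b)]
    field_simp
    ring
  have : 0 ≤ (c * |a - b| - 2 * (a + b)) ^ 2 / (4 * (a + b) * c) := by positivity
  linarith

theorem abs_mul_log_div_midpoint_le {a b : ℝ} (ha : 0 ≤ a) (hb : 0 ≤ b) :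
    |a * log (a / ((a + b) / 2))| ≤ a + b := by
  rcases ha.eq_or_lt with rfl | ha
  · simpa using hb
  have hu : 0 < a / ((a + b) / 2) := by positivity
  have hu_le : a / ((a + b) / 2) ≤ 2 := by rw [div_le_iff₀ (by positivity)]; linarith
  have hlower : a * (1 - (a / ((a + b) / 2))⁻¹) ≤ a * log (a / ((a + b) / 2)) :=
    mul_le_mul_of_nonneg_left (one_sub_inv_le_log_of_pos hu) ha.le
  have hupper : log (a / ((a + b) / 2)) ≤ 1 := by linarith [log_le_sub_one_of_pos hu]
  have hlower_eq : a * (1 - (a / ((a + b) / 2))⁻¹) = (a - b) / 2 := by field_simp; ring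
  rw [abs_le]
  constructor
  · linarith
  · linarith [mul_le_of_le_one_right ha.le hupper]

theorem le_sqrt_two_mul_sqrt_of_forall_le {x y : ℝ} (h : ∀ c > 0, x ≤ c * y / 2 + 1 / c) :
    x ≤ √2 * √y := by
  rcases le_or_gt y 0 with hy | hy
  · rw [sqrt_eq_zero'.mpr hy, mul_zero]
    by_contra! hx
    have hc := h (2 / x) (by positivity)
    have : 2 / x * y / 2 ≤ 0 := by
      have : 0 < 2 / x := by positivity
      nlinarith
    rw [one_div_div] at hc
    linarith
  · have hy' : 0 < √y := sqrt_pos.mpr hy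
    have hc := h (√2 / √y) (by positivity)
    have hcy : √2 / √y * y / 2 = √2 * √y / 2 := by
      nth_rw 2 [← sq_sqrt hy.le]; field_simp
    have hinv : 1 / (√2 / √y) = √2 * √y / 2 := by
      field_simp; rw [sq_sqrt zero_le_two]
    linarith

section Densities

variable {Ω : Type*} [MeasurableSpace Ω] {μ : Measure Ω} {p q r : Ω → ℝ}

theorem IsProbDensity.integrable (hp : IsProbDensity μ p) : Integrable p μ :=
  Integrable.of_integral_ne_zero (by rw [hp.2.2]; exact one_ne_zero)

theorem integrable_mul_log_div_midpoint (hp : IsProbDensity μ p) (hq : IsProbDensity μ q) :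
    Integrable (fun x => p x * log (p x / ((p x + q x) / 2))) μ := by
  refine (hp.integrable.add hq.integrable).mono' ?_ (ae_of_all _ fun x => ?_)
  · exact (hp.1.mul (measurable_log.comp (hp.1.div ((hp.1.add hq.1).div_const 2))))
      |>.aestronglyMeasurable
  · exact (norm_eq_abs _).trans_le (abs_mul_log_div_midpoint_le (hp.2.1 x) (hq.2.1 x))

theorem TVdist_comm (p q : Ω → ℝ) : TVdist μ p q = TVdist μ q p := by
  simp only [TVdist, abs_sub_comm]

theorem TVdist_triangle (hp : Integrable p μ) (hq : Integrable q μ) (hr : Integrable r μ) :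
    TVdist μ p r ≤ TVdist μ p q + TVdist μ q r := by
  have hpq : Integrable (fun x => |p x - q x|) μ := (hp.sub hq).abs
  have hqr : Integrable (fun x => |q x - r x|) μ := (hq.sub hr).abs
  rw [TVdist, TVdist, TVdist, ← mul_add, ← integral_add hpq hqr]
  gcongr
  · exact (hp.sub hr).abs
  · exact hpq.add hqr
  · exact fun x => abs_sub_le _ _ _

theorem TVdist_le_mul_JSdiv_add (hp : IsProbDensity μ p) (hq : IsProbDensity μ q) {c : ℝ}
    (hc : 0 < c) : TVdist μ p q ≤ c * JSdiv μ p q / 2 + 1 / c := by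
  set f := fun x => p x * log (p x / ((p x + q x) / 2))
  set g := fun x => q x * log (q x / ((p x + q x) / 2))
  have hf : Integrable f μ := integrable_mul_log_div_midpoint hp hq
  have hg : Integrable g μ := by
    simpa only [add_comm (q _)] using integrable_mul_log_div_midpoint hq hp
  have hpq : Integrable (fun x => p x + q x) μ := hp.integrable.add hq.integrable
  have hfg : Integrable (fun x => c / 2 * (f x + g x)) μ := (hf.add hg).const_mul _
  have hpw : ∀ x, |p x - q x| ≤ c / 2 * (f x + g x) + (p x + q x) / c := fun x =>
    (abs_sub_le_mul_sq_sub_div_add (hp.2.1 x) (hq.2.1 x) hc).trans <| by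
      gcongr; exact sq_sub_div_le_mul_log_div_midpoint_add (hp.2.1 x) (hq.2.1 x)
  have hint : ∫ x, |p x - q x| ∂μ ≤ ∫ x, (c / 2 * (f x + g x) + (p x + q x) / c) ∂μ :=
    integral_mono (hp.integrable.sub hq.integrable).abs (hfg.add (hpq.div_const c)) hpw
  rw [integral_add hfg (hpq.div_const c), integral_const_mul, integral_add hf hg, integral_div,
    integral_add hp.integrable hq.integrable, hp.2.2, hq.2.2, one_add_one_eq_two] at hint
  have hJS : ∫ x, f x ∂μ + ∫ x, g x ∂μ = 2 * JSdiv μ p q := by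
    simp only [JSdiv, KLdiv, f, g]; ring
  rw [hJS] at hint
  calc TVdist μ p q = 1 / 2 * ∫ x, |p x - q x| ∂μ := rfl
    _ ≤ 1 / 2 * (c / 2 * (2 * JSdiv μ p q) + 2 / c) := by gcongr
    _ = c * JSdiv μ p q / 2 + 1 / c := by ring

theorem TVdist_le_sqrt_two_mul_dJS (hp : IsProbDensity μ p) (hq : IsProbDensity μ q) :
    TVdist μ p q ≤ √2 * dJS μ p q :=
  le_sqrt_two_mul_sqrt_of_forall_le fun _ hc => TVdist_le_mul_JSdiv_add hp hq hc

end Densities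

theorem discriminant_risk_upper_bound_general {Ω : Type*} [MeasurableSpace Ω]
    (μ : Measure Ω)
    (N : ℕ) [NeZero N] (pt ps : Ω → ℝ) (p : Fin N → Ω → ℝ)
    (hpt : IsProbDensity μ pt) (hps : IsProbDensity μ ps)
    (hp : ∀ i, IsProbDensity μ (p i))
    (hmax : ∀ u v : Fin N,
      dJS μ (p u) (p v) ≤ Finset.univ.sup' Finset.univ_nonempty (fun i => dJS μ (p i) ps)) :
    TVdist μ pt ps ≤
      (1 / N) * ∑ i, TVdist μ (p i) ps
        + Real.sqrt 2 * Finset.univ.inf' Finset.univ_nonempty (fun i => dJS μ (p i) pt)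
        + Real.sqrt 2 * Finset.univ.sup' Finset.univ_nonempty (fun i => dJS μ (p i) ps) := by
  obtain ⟨j, -, hj⟩ := Finset.exists_mem_eq_inf' Finset.univ_nonempty (fun i => dJS μ (p i) pt)
  set dmin := Finset.univ.inf' Finset.univ_nonempty (fun i => dJS μ (p i) pt)
  set dmax := Finset.univ.sup' Finset.univ_nonempty (fun i => dJS μ (p i) ps)
  have hbound : ∀ i ∈ Finset.univ,
      TVdist μ pt ps - (√2 * dmin + √2 * dmax) ≤ TVdist μ (p i) ps := by
    intro i _
    have htj : TVdist μ pt (p j) ≤ √2 * dmin := by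
      rw [TVdist_comm, hj]; exact TVdist_le_sqrt_two_mul_dJS (hp j) hpt
    have hji : TVdist μ (p j) (p i) ≤ √2 * dmax :=
      (TVdist_le_sqrt_two_mul_dJS (hp j) (hp i)).trans
        (mul_le_mul_of_nonneg_left (hmax j i) (sqrt_nonneg 2))
    linarith [TVdist_triangle hpt.integrable (hp j).integrable hps.integrable,
      TVdist_triangle (hp j).integrable (hp i).integrable hps.integrable]
  have havg := Finset.le_expect Finset.univ_nonempty hbound
  rw [Finset.expect_eq_sum_div_card, Finset.card_univ, Fintype.card_fin] at havg
  rw [one_div_mul_eq_div]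
  linarith

/-- Theorem 1 (upper bound): the Discriminant Risk on the target domain is bounded by the
average Discriminant Risk over the source subsets, plus √2 times the smallest JS distance
from a source subset to the target, plus √2 times the largest JS distance from a source
subset to the overall source distribution. -/
theorem discriminant_risk_upper_bound {Ω : Type*} [MeasurableSpace Ω]
    (μ : Measure Ω) [SigmaFinite μ]
    (N : ℕ) [NeZero N] (pt ps : Ω → ℝ) (p : Fin N → Ω → ℝ)
    (hpt : IsProbDensity μ pt) (hps : IsProbDensity μ ps)
    (hp : ∀ i, IsProbDensity μ (p i))
    (hmax : ∀ u v : Fin N,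
      dJS μ (p u) (p v) ≤ Finset.univ.sup' Finset.univ_nonempty (fun i => dJS μ (p i) ps)) :
    TVdist μ pt ps ≤
      (1 / N) * ∑ i, TVdist μ (p i) ps
        + Real.sqrt 2 * Finset.univ.inf' Finset.univ_nonempty (fun i => dJS μ (p i) pt)
        + Real.sqrt 2 * Finset.univ.sup' Finset.univ_nonempty (fun i => dJS μ (p i) ps) :=
  discriminant_risk_upper_bound_general μ N pt ps p hpt hps hp hmax
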